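/- For all k ≥ 0, a_k(3) = C(k+2, k) + 1. -/

import Mathlib

/-! Splitting off the last term of the defining sum gives the Pascal-type recurrence
`a (k+1) (n+1) = a (k+1) n + a k (n+1)`. With `n = 0, 1, 2` it yields `a k 1 = 1`, then
`a k 2 = k + 1`, and finally `a k 3 = C(k+2, k) + 1`, the last step being Pascal's rule. -/

def fib (n : ℕ) : ℕ := Nat.fib n

def a : ℕ → ℕ → ℕ
  | 0, n => fib n
  | k + 1, n => ∑ m ∈ Finset.Icc 1 n, a k m

def s (k n : ℕ) : ℕ :=
  ((Finset.Icc 1 n).powerset.filter (fun S => k ≤ S.card ∧ ∀ x ∈ S, S.card ≤ x)).card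

lemma a_zero_right (k : ℕ) : a k 0 = 0 := by
  cases k <;> rfl

lemma a_succ_succ (k n : ℕ) : a (k + 1) (n + 1) = a (k + 1) n + a k (n + 1) :=
  Finset.sum_Icc_succ_top (Nat.le_add_left 1 n) _

lemma a_one (k : ℕ) : a k 1 = 1 := by
  induction k with
  | zero => rfl
  | succ k ih => rw [a_succ_succ, a_zero_right, ih]

lemma a_two (k : ℕ) : a k 2 = k + 1 := by
  induction k with
  | zero => rfl
  | succ k ih => rw [a_succ_succ, a_one, ih]; ring

theorem a_three (k : ℕ) : a k 3 = Nat.choose (k + 2) k + 1 := by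
  induction k with
  | zero => rfl
  | succ k ih =>
    rw [a_succ_succ, a_two, ih, Nat.choose_succ_succ' (k + 2) k, Nat.choose_succ_self_right]
    ring
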